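/- arXiv:2411.02658 — 2 statements merged into one kernel-verified Lean document; each statement's English description precedes it below -/
import Mathlib

section
/- Transitivity of k-well-linkedness along k-better-linked sets: let G be a hypergraph, k an integer, let A ⊊ E(G) be k-better-linked in G, and let B ⊆ E(G ◁ A) be k-well-linked in G ◁ A. Then B ▷ A is k-well-linked in G. -/
open Finset

variable {V E : Type} [Fintype V] [DecidableEq V] [Fintype E] [DecidableEq E]

/-- `V(A)`: the union of the vertex sets of the hyperedges in `A`. -/
def hVerts (inc : E → Finset V) (A : Finset E) : Finset V :=
  A.biUnion inc

/-- The border `bd(A) = V(A) ∩ V(Ā)` of a set of hyperedges. -/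
def hBd (inc : E → Finset V) (A : Finset E) : Finset V :=
  hVerts inc A ∩ hVerts inc Aᶜ

/-- The order function `λ(A) = |bd(A)|`. -/
def hLam (inc : E → Finset V) (A : Finset E) : ℕ :=
  (hBd inc A).card

/-- `A` is well-linked: for every bipartition `(B1, B2)` of `A`, `λ(B1) ≥ λ(A)` or
`λ(B2) ≥ λ(A)`. -/
def WellLinked (inc : E → Finset V) (A : Finset E) : Prop :=
  ∀ B1 B2 : Finset E, Disjoint B1 B2 → B1 ∪ B2 = A →
    hLam inc A ≤ hLam inc B1 ∨ hLam inc A ≤ hLam inc B2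

/-- `A` is `k`-well-linked: for every bipartition `(B1, B2)` of `A`, either `λ(B1) ≥ λ(A)`,
or `λ(B2) ≥ λ(A)`, or both `λ(B1) ≥ k` and `λ(B2) ≥ k`. -/
def KWellLinked (inc : E → Finset V) (k : ℕ) (A : Finset E) : Prop :=
  ∀ B1 B2 : Finset E, Disjoint B1 B2 → B1 ∪ B2 = A →
    hLam inc A ≤ hLam inc B1 ∨ hLam inc A ≤ hLam inc B2 ∨
      (k ≤ hLam inc B1 ∧ k ≤ hLam inc B2)

/-- `A` is `k`-better-linked: either `A` is well-linked, or `A` is `k`-well-linked and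
`Ā` is well-linked. -/
def KBetterLinked (inc : E → Finset V) (k : ℕ) (A : Finset E) : Prop :=
  WellLinked inc A ∨ (KWellLinked inc k A ∧ WellLinked inc Aᶜ)

/-- The incidence map of the hypergraph `G ◁ A`. -/
def quotInc (inc : E → Finset V) (A : Finset E) :
    Option {e : E // e ∉ A} → Finset V
  | none => hBd inc A
  | some e => inc e.val

/-- `B ▷ A`: the set of hyperedges of `G` corresponding to `B ⊆ E(G ◁ A)`. -/
def hPush (A : Finset E) (B : Finset (Option {e : E // e ∉ A})) : Finset E :=
  B.biUnion fun x => x.elim A fun e => {e.val}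

/-!
Let `(B₁, B₂)` be a bipartition of `D = B ▷ A`. The order function of `G ◁ A` is that of `G`
transported along `▷`, so if `e_A ∉ B` the bipartition is one of `B` and there is nothing to do.
Otherwise `A ⊆ D`, and `k`-better-linkedness of `A` applied to `(B₁ ∩ A, B₂ ∩ A)` leaves two
cases. If, say, `λ(A) ≤ λ(B₁ ∩ A)`, split `B` as `(e_A + B₁, B₂)`: its sides correspond to
`B₁ ∪ A` and `B₂ \ A`, whose orders are at most `λ(B₁)` and `λ(B₂)` by submodularity and
posimodularity of `λ`. Otherwise both parts of `A` have order at least `k` and `Ā` is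
well-linked, which forces `λ(B₁), λ(B₂) ≥ k`.
-/
section OrderFunction

omit [Fintype V]

variable {inc : E → Finset V}

omit [Fintype E] in
theorem sdiff_eq_inter_of_subset_union {S T U : Finset E} (hd : Disjoint S T) (hU : U ⊆ S ∪ T) :
    U \ T = S ∩ U := by
  ext e
  have hST : e ∈ S → e ∉ T := fun h => disjoint_left.1 hd h
  have hUST : e ∈ U → e ∈ S ∪ T := fun h => hU h
  simp only [mem_sdiff, mem_inter, mem_union] at hUST ⊢
  tauto

omit [Fintype E] [DecidableEq E] in
theorem mem_hVerts {S : Finset E} {v : V} : v ∈ hVerts inc S ↔ ∃ e ∈ S, v ∈ inc e := by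
  simp [hVerts]

theorem mem_hBd {S : Finset E} {v : V} :
    v ∈ hBd inc S ↔ (∃ e ∈ S, v ∈ inc e) ∧ ∃ e ∉ S, v ∈ inc e := by
  simp [hBd, mem_hVerts]

theorem hLam_compl (S : Finset E) : hLam inc Sᶜ = hLam inc S := by
  rw [hLam, hBd, compl_compl, inter_comm, ← hBd, ← hLam]

theorem hLam_union_add_hLam_inter_le (X Y : Finset E) :
    hLam inc (X ∪ Y) + hLam inc (X ∩ Y) ≤ hLam inc X + hLam inc Y := by
  have hsup : hBd inc (X ∪ Y) ∪ hBd inc (X ∩ Y) ⊆ hBd inc X ∪ hBd inc Y := by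
    intro v
    simp only [mem_union, mem_inter, mem_hBd]
    grind
  have hinf : hBd inc (X ∪ Y) ∩ hBd inc (X ∩ Y) ⊆ hBd inc X ∩ hBd inc Y := by
    intro v
    simp only [mem_union, mem_inter, mem_hBd]
    grind
  calc hLam inc (X ∪ Y) + hLam inc (X ∩ Y)
      = #(hBd inc (X ∪ Y) ∪ hBd inc (X ∩ Y)) + #(hBd inc (X ∪ Y) ∩ hBd inc (X ∩ Y)) :=
        (card_union_add_card_inter _ _).symm
    _ ≤ #(hBd inc X ∪ hBd inc Y) + #(hBd inc X ∩ hBd inc Y) :=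
        Nat.add_le_add (card_le_card hsup) (card_le_card hinf)
    _ = hLam inc X + hLam inc Y := card_union_add_card_inter _ _

theorem hLam_sdiff_add_hLam_sdiff_le (X Y : Finset E) :
    hLam inc (X \ Y) + hLam inc (Y \ X) ≤ hLam inc X + hLam inc Y := by
  have h := hLam_union_add_hLam_inter_le (inc := inc) X Yᶜ
  have hunion : X ∪ Yᶜ = (Y \ X)ᶜ := by ext; simp; tauto
  rwa [hunion, ← sdiff_eq_inter_compl, hLam_compl, hLam_compl, add_comm (hLam inc _)] at h

theorem hLam_union_le_of_le_inter {A S : Finset E} (h : hLam inc A ≤ hLam inc (S ∩ A)) :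
    hLam inc (S ∪ A) ≤ hLam inc S := by
  have := hLam_union_add_hLam_inter_le (inc := inc) S A
  omega

theorem hLam_sdiff_le_of_le_sdiff {A S : Finset E} (h : hLam inc A ≤ hLam inc (A \ S)) :
    hLam inc (S \ A) ≤ hLam inc S := by
  have := hLam_sdiff_add_hLam_sdiff_le (inc := inc) S A
  omega

/-- Split `Ā` into `S \ A` and `(S ∪ A)ᶜ`: one of them has order at least `λ(A)`, and
posimodularity resp. submodularity then bounds `λ(A \ S)` resp. `λ(S ∩ A)` by `λ(S)`. -/
theorem WellLinked.le_hLam_of_compl {A S : Finset E} {k : ℕ} (hAc : WellLinked inc Aᶜ)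
    (hinter : k ≤ hLam inc (S ∩ A)) (hsdiff : k ≤ hLam inc (A \ S)) : k ≤ hLam inc S := by
  have hd : Disjoint (S \ A) (S ∪ A)ᶜ :=
    disjoint_compl_right.mono_left (sdiff_subset.trans subset_union_left)
  have hu : S \ A ∪ (S ∪ A)ᶜ = Aᶜ := by ext; simp; tauto
  rcases hAc _ _ hd hu with h | h <;> simp only [hLam_compl] at h
  · have := hLam_sdiff_add_hLam_sdiff_le (inc := inc) S A
    omega
  · have := hLam_union_add_hLam_inter_le (inc := inc) S A
    omega

theorem KBetterLinked.split {k : ℕ} {A A₁ A₂ : Finset E} (hA : KBetterLinked inc k A)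
    (hd : Disjoint A₁ A₂) (hu : A₁ ∪ A₂ = A) :
    hLam inc A ≤ hLam inc A₁ ∨ hLam inc A ≤ hLam inc A₂ ∨
      (k ≤ hLam inc A₁ ∧ k ≤ hLam inc A₂ ∧ WellLinked inc Aᶜ) := by
  rcases hA with hw | ⟨hk, hAc⟩
  · exact (hw _ _ hd hu).imp_right Or.inl
  · exact (hk _ _ hd hu).imp_right (Or.imp_right fun h => ⟨h.1, h.2, hAc⟩)

end OrderFunction

section Push

omit [Fintype V] [Fintype E]

variable {inc : E → Finset V} {A : Finset E}

theorem mem_hPush {C : Finset (Option {e : E // e ∉ A})} {e : E} :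
    e ∈ hPush A C ↔ (e ∈ A ∧ none ∈ C) ∨ ∃ h : e ∉ A, some ⟨e, h⟩ ∈ C := by
  simp [hPush, Option.exists, and_comm]

theorem subset_hPush {C : Finset (Option {e : E // e ∉ A})} (hC : none ∈ C) : A ⊆ hPush A C :=
  fun _ he => mem_hPush.2 (Or.inl ⟨he, hC⟩)

theorem hPush_insert_none {C : Finset (Option {e : E // e ∉ A})} :
    hPush A (insert none C) = A ∪ hPush A C :=
  biUnion_insert

theorem mem_hVerts_hPush {C : Finset (Option {e : E // e ∉ A})} {v : V} :
    v ∈ hVerts inc (hPush A C) ↔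
      (none ∈ C ∧ v ∈ hVerts inc A) ∨ ∃ a : {e : E // e ∉ A}, some a ∈ C ∧ v ∈ inc a := by
  simp only [mem_hVerts, mem_hPush, Subtype.exists]
  grind

/-- `S \ A`, viewed as a set of hyperedges of `G ◁ A`. -/
def quotLift (A S : Finset E) : Finset (Option {e : E // e ∉ A}) :=
  (S.subtype (· ∉ A)).map Function.Embedding.some

theorem none_notMem_quotLift {S : Finset E} : none ∉ quotLift A S := by
  simp [quotLift]

theorem some_mem_quotLift {S : Finset E} {a : {e : E // e ∉ A}} :
    some a ∈ quotLift A S ↔ a.1 ∈ S := by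
  simp [quotLift]

theorem quotLift_union {S T : Finset E} : quotLift A (S ∪ T) = quotLift A S ∪ quotLift A T := by
  ext (_ | a) <;> simp [none_notMem_quotLift, some_mem_quotLift]

theorem disjoint_quotLift {S T : Finset E} (h : Disjoint S T) :
    Disjoint (quotLift A S) (quotLift A T) := by
  rw [disjoint_left]
  rintro (_ | a) hS hT
  · exact none_notMem_quotLift hS
  · exact disjoint_left.1 h (some_mem_quotLift.1 hS) (some_mem_quotLift.1 hT)

theorem hPush_quotLift {S : Finset E} : hPush A (quotLift A S) = S \ A := by
  ext e
  by_cases he : e ∈ A <;> simp [mem_hPush, none_notMem_quotLift, some_mem_quotLift, he]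

theorem quotLift_hPush {C : Finset (Option {e : E // e ∉ A})} :
    quotLift A (hPush A C) = C.erase none := by
  ext (_ | a)
  · simp [none_notMem_quotLift]
  · simp [some_mem_quotLift, mem_hPush, a.2]

end Push

section Quotient

omit [Fintype V]

variable {inc : E → Finset V} {A : Finset E}

theorem hPush_compl (C : Finset (Option {e : E // e ∉ A})) : hPush A Cᶜ = (hPush A C)ᶜ := by
  ext e
  by_cases he : e ∈ A <;> simp [mem_hPush, he]

theorem mem_hVerts_quotInc {C : Finset (Option {e : E // e ∉ A})} {v : V} :
    v ∈ hVerts (quotInc inc A) C ↔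
      (none ∈ C ∧ v ∈ hBd inc A) ∨ ∃ a : {e : E // e ∉ A}, some a ∈ C ∧ v ∈ inc a := by
  simp [hVerts, quotInc, Option.exists]

theorem hLam_quotInc (C : Finset (Option {e : E // e ∉ A})) :
    hLam (quotInc inc A) C = hLam inc (hPush A C) := by
  suffices hBd (quotInc inc A) C = hBd inc (hPush A C) by rw [hLam, hLam, this]
  ext v
  have hAc : v ∈ hVerts inc Aᶜ ↔ ∃ a : {e : E // e ∉ A}, v ∈ inc a := by
    simp [mem_hVerts]
  have hsplit : (∃ a : {e : E // e ∉ A}, v ∈ inc a) ↔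
      (∃ a, some a ∈ C ∧ v ∈ inc a) ∨ ∃ a, some a ∈ Cᶜ ∧ v ∈ inc a := by
    simp only [← exists_or, ← or_and_right, mem_compl, em, true_and]
  -- After `hPush_compl` the two borders differ only in `v ∈ bd(A)` versus `v ∈ V(A)`, and the
  -- missing `v ∈ V(Ā)` is supplied by the other factor of the intersection.
  rw [hBd, hBd, ← hPush_compl, mem_inter, mem_inter, mem_hVerts_quotInc, mem_hVerts_quotInc,
    mem_hVerts_hPush, mem_hVerts_hPush, hBd, mem_inter, hAc, hsplit]
  generalize (∃ a, some a ∈ C ∧ v ∈ inc a) = inC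
  generalize (∃ a, some a ∈ Cᶜ ∧ v ∈ inc a) = notInC
  rw [mem_compl]
  tauto

end Quotient

section Transitivity

omit [Fintype V]

variable {inc : E → Finset V} {k : ℕ} {A : Finset E} {B : Finset (Option {e : E // e ∉ A})}

theorem KWellLinked.hPush_of_none_notMem (hB : KWellLinked (quotInc inc A) k B) (hn : none ∉ B) :
    KWellLinked inc k (hPush A B) := by
  intro B₁ B₂ hd hu
  have hA : Disjoint (hPush A B) A := by
    rw [disjoint_right]
    intro e he hmem
    rcases mem_hPush.1 hmem with ⟨-, hnB⟩ | ⟨heA, -⟩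
    exacts [hn hnB, heA he]
  have hu' : quotLift A B₁ ∪ quotLift A B₂ = B := by
    rw [← quotLift_union, hu, quotLift_hPush, erase_eq_of_notMem hn]
  have hsplit := hB _ _ (disjoint_quotLift hd) hu'
  rwa [hLam_quotInc, hLam_quotInc, hLam_quotInc, hPush_quotLift, hPush_quotLift,
    sdiff_eq_self_of_disjoint (hA.mono_left (hu ▸ subset_union_left)),
    sdiff_eq_self_of_disjoint (hA.mono_left (hu ▸ subset_union_right))] at hsplit

theorem KWellLinked.hPush_split_of_le_inter (hB : KWellLinked (quotInc inc A) k B)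
    (hn : none ∈ B) {B₁ B₂ : Finset E} (hd : Disjoint B₁ B₂) (hu : B₁ ∪ B₂ = hPush A B)
    (hA : hLam inc A ≤ hLam inc (B₁ ∩ A)) :
    hLam inc (hPush A B) ≤ hLam inc B₁ ∨ hLam inc (hPush A B) ≤ hLam inc B₂ ∨
      (k ≤ hLam inc B₁ ∧ k ≤ hLam inc B₂) := by
  have hd' : Disjoint (insert none (quotLift A B₁)) (quotLift A B₂) :=
    disjoint_insert_left.2 ⟨none_notMem_quotLift, disjoint_quotLift hd⟩
  have hu' : insert none (quotLift A B₁) ∪ quotLift A B₂ = B := by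
    rw [insert_union, ← quotLift_union, hu, quotLift_hPush, insert_erase hn]
  have hsplit := hB _ _ hd' hu'
  have hpush : hPush A (insert none (quotLift A B₁)) = B₁ ∪ A := by
    rw [hPush_insert_none, hPush_quotLift, union_sdiff_self_eq_union, union_comm]
  rw [hLam_quotInc, hLam_quotInc, hLam_quotInc, hpush, hPush_quotLift] at hsplit
  have h₁ : hLam inc (B₁ ∪ A) ≤ hLam inc B₁ := hLam_union_le_of_le_inter hA
  have h₂ : hLam inc (B₂ \ A) ≤ hLam inc B₂ := hLam_sdiff_le_of_le_sdiff
    (by rwa [sdiff_eq_inter_of_subset_union hd (hu ▸ subset_hPush hn)])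
  omega

end Transitivity

theorem kWellLinked_transitive_general (inc : E → Finset V) (k : ℕ)
    (A : Finset E) (hbl : KBetterLinked inc k A)
    (B : Finset (Option {e : E // e ∉ A}))
    (hkwl : KWellLinked (quotInc inc A) k B) :
    KWellLinked inc k (hPush A B) := by
  by_cases hn : none ∈ B
  swap
  · exact hkwl.hPush_of_none_notMem hn
  intro B₁ B₂ hd hu
  have hAD : A ⊆ B₁ ∪ B₂ := hu ▸ subset_hPush hn
  have hA₁ : A \ B₂ = B₁ ∩ A := sdiff_eq_inter_of_subset_union hd hAD
  have hA₂ : A \ B₁ = B₂ ∩ A := sdiff_eq_inter_of_subset_union hd.symm (union_comm B₁ B₂ ▸ hAD)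
  have hsplitA : (B₁ ∩ A) ∪ (B₂ ∩ A) = A := by
    rw [← union_inter_distrib_right, inter_eq_right.2 hAD]
  rcases hbl.split (hd.mono inter_subset_left inter_subset_left) hsplitA with h | h | ⟨h₁, h₂, hAc⟩
  · exact hkwl.hPush_split_of_le_inter hn hd hu h
  · have := hkwl.hPush_split_of_le_inter hn hd.symm (union_comm B₁ B₂ ▸ hu) h
    tauto
  · exact Or.inr (Or.inr
      ⟨hAc.le_hLam_of_compl h₁ (hA₂ ▸ h₂), hAc.le_hLam_of_compl h₂ (hA₁ ▸ h₁)⟩)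

/-- Transitivity of `k`-well-linkedness along `k`-better-linked sets: if `A ⊊ E(G)` is
`k`-better-linked in `G` and `B ⊆ E(G ◁ A)` is `k`-well-linked in `G ◁ A`, then
`B ▷ A` is `k`-well-linked in `G`. -/
theorem kWellLinked_transitive (inc : E → Finset V)
    (hcov : ∀ v : V, ∃ e : E, v ∈ inc e) (k : ℕ)
    (A : Finset E) (hA : A ≠ Finset.univ) (hbl : KBetterLinked inc k A)
    (B : Finset (Option {e : E // e ∉ A}))
    (hkwl : KWellLinked (quotInc inc A) k B) :
    KWellLinked inc k (hPush A B) :=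
  kWellLinked_transitive_general inc k A hbl B hkwl
end

section
/- Let G be a hypergraph and A ⊆ B ⊆ E(G). If A is well-linked and B is linked into A, then B is well-linked. -/
open Finset

variable {V E : Type} [Fintype V] [DecidableEq V] [Fintype E] [DecidableEq E]

/-- `B` is linked into `A`: every `X` with `A ⊆ X ⊆ B` has `λ(X) ≥ λ(B)`. -/
def LinkedInto (inc : E → Finset V) (A B : Finset E) : Prop :=
  ∀ X : Finset E, A ⊆ X → X ⊆ B → hLam inc B ≤ hLam inc X


lemma hBd_mem_iff (inc : E → Finset V) (X : Finset E) (v : V) :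
    v ∈ hBd inc X ↔ (∃ e ∈ X, v ∈ inc e) ∧ (∃ f, f ∉ X ∧ v ∈ inc f) := by
  simp [hBd, hVerts, mem_inter, mem_biUnion, mem_compl]

lemma bd_union_subset (inc : E → Finset V) (X Y : Finset E) :
    hBd inc (X ∪ Y) ⊆ hBd inc X ∪ hBd inc Y := by
  intro v hv
  rw [hBd_mem_iff] at hv
  obtain ⟨⟨e, he, hve⟩, ⟨f, hf, hvf⟩⟩ := hv
  rw [mem_union] at he
  rw [mem_union, not_or] at hf
  rcases he with he | he
  · exact mem_union_left _ ((hBd_mem_iff inc X v).mpr ⟨⟨e, he, hve⟩, ⟨f, hf.1, hvf⟩⟩)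
  · exact mem_union_right _ ((hBd_mem_iff inc Y v).mpr ⟨⟨e, he, hve⟩, ⟨f, hf.2, hvf⟩⟩)

lemma bd_inter_subset (inc : E → Finset V) (X Y : Finset E) :
    hBd inc (X ∩ Y) ⊆ hBd inc X ∪ hBd inc Y := by
  intro v hv
  rw [hBd_mem_iff] at hv
  obtain ⟨⟨e, he, hve⟩, ⟨f, hf, hvf⟩⟩ := hv
  rw [mem_inter] at he
  rw [mem_inter, not_and_or] at hf
  rcases hf with hf | hf
  · exact mem_union_left _ ((hBd_mem_iff inc X v).mpr ⟨⟨e, he.1, hve⟩, ⟨f, hf, hvf⟩⟩)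
  · exact mem_union_right _ ((hBd_mem_iff inc Y v).mpr ⟨⟨e, he.2, hve⟩, ⟨f, hf, hvf⟩⟩)

lemma bd_ui_subset (inc : E → Finset V) (X Y : Finset E) :
    hBd inc (X ∪ Y) ∩ hBd inc (X ∩ Y) ⊆ hBd inc X ∩ hBd inc Y := by
  intro v hv
  rw [mem_inter, hBd_mem_iff, hBd_mem_iff] at hv
  obtain ⟨⟨_, ⟨f, hf, hvf⟩⟩, ⟨⟨e, he, hve⟩, _⟩⟩ := hv
  rw [mem_inter] at he
  rw [mem_union, not_or] at hf
  rw [mem_inter, hBd_mem_iff, hBd_mem_iff]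
  exact ⟨⟨⟨e, he.1, hve⟩, ⟨f, hf.1, hvf⟩⟩, ⟨⟨e, he.2, hve⟩, ⟨f, hf.2, hvf⟩⟩⟩

lemma hLam_submod (inc : E → Finset V) (X Y : Finset E) :
    hLam inc (X ∪ Y) + hLam inc (X ∩ Y) ≤ hLam inc X + hLam inc Y := by
  have h1 : hBd inc (X ∪ Y) ∪ hBd inc (X ∩ Y) ⊆ hBd inc X ∪ hBd inc Y :=
    union_subset (bd_union_subset inc X Y) (bd_inter_subset inc X Y)
  have h2 := bd_ui_subset inc X Y
  calc hLam inc (X ∪ Y) + hLam inc (X ∩ Y)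
      = (hBd inc (X ∪ Y) ∪ hBd inc (X ∩ Y)).card
        + (hBd inc (X ∪ Y) ∩ hBd inc (X ∩ Y)).card :=
        (card_union_add_card_inter _ _).symm
    _ ≤ (hBd inc X ∪ hBd inc Y).card + (hBd inc X ∩ hBd inc Y).card :=
        add_le_add (card_le_card h1) (card_le_card h2)
    _ = hLam inc X + hLam inc Y := card_union_add_card_inter _ _

/-- If `A ⊆ B ⊆ E(G)`, `A` is well-linked and `B` is linked into `A`, then `B` is
well-linked. -/
theorem linkedInto_wellLinked (inc : E → Finset V)
    (hcov : ∀ v : V, ∃ e : E, v ∈ inc e)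
    (A B : Finset E) (hAB : A ⊆ B)
    (hwl : WellLinked inc A) (hlink : LinkedInto inc A B) :
    WellLinked inc B := by
  intro B1 B2 hdisj huni
  have hA : (A ∩ B1) ∪ (A ∩ B2) = A := by
    rw [← inter_union_distrib_left, huni, inter_eq_left]
    exact hAB
  have hd : Disjoint (A ∩ B1) (A ∩ B2) :=
    hdisj.mono inter_subset_right inter_subset_right
  have hB1 : B1 ⊆ B := huni ▸ subset_union_left
  have hB2 : B2 ⊆ B := huni ▸ subset_union_right
  rcases hwl _ _ hd hA with h | h
  · left
    have hx := hlink (B1 ∪ A) subset_union_right (union_subset hB1 hAB)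
    have hsub := hLam_submod inc B1 A
    rw [inter_comm B1 A] at hsub
    omega
  · right
    have hx := hlink (B2 ∪ A) subset_union_right (union_subset hB2 hAB)
    have hsub := hLam_submod inc B2 A
    rw [inter_comm B2 A] at hsub
    omega
end
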